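/- arXiv:math-ph/0412071 — 4 statements merged into one kernel-verified Lean document; each statement's English description precedes it below -/
import Mathlib

section
/- Let 0 < μ < 1 and x > 0. Then (1/2π) ∫_ℝ e^{-|k|^μ} e^{-ikx} dk = (1/π) Σ_{n=1}^∞ ((-1)^{n+1}/n!) · sin(πμn/2) · Γ(μn+1) · x^{-(μn+1)}, where the series on the right-hand side converges absolutely. -/
/-!
For `Re z > 0`, expanding `e^{-t^μ} = ∑ (-1)^n t^{μn} / n!` and integrating term by term against
`e^{-zt}` gives `∫₀^∞ e^{-t^μ} e^{-zt} dt = ∑ (-1)^n Γ(μn+1)/n! · z^{-(μn+1)}`. The exchange is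
legitimate because log-convexity of `Γ` gives `Γ(μn+1) ≤ (n!)^μ`, so for `μ < 1` the coefficients
decay like `(n!)^{μ-1}` and the series of absolute values converges. The same bound makes the
series converge uniformly on `{Re z ≥ 0, |z| ≥ c}`, while the integral is continuous on
`{Re z ≥ 0}` by dominated convergence; hence the identity persists on the imaginary axis, in
particular at `z = ix`. The Fourier integrand is Hermitian, so the integral over `ℝ` is twice the
real part of the half-line integral at `z = ix`, and `Re (ix)^{-(μn+1)} = -x^{-(μn+1)} sin(πμn/2)`.

The complex-rate Gamma integral `∫₀^∞ t^q e^{-zt} dt = Γ(q+1) z^{-(q+1)}` used above comes from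
the real-rate one by analytic continuation: the left side is the complex MGF of the measure
`t^q dt` on `(0, ∞)`.
-/

open MeasureTheory Real Set Filter Topology ProbabilityTheory
open scoped Complex ComplexConjugate ENNReal Nat

theorem AnalyticOnNhd.eqOn_of_preconnected_of_eq_ofReal {f g : ℂ → ℂ} {U : Set ℂ}
    (hf : AnalyticOnNhd ℂ f U) (hg : AnalyticOnNhd ℂ g U) (hU : IsPreconnected U)
    (hUo : IsOpen U) {x₀ : ℝ} (hx₀ : (x₀ : ℂ) ∈ U) (hfg : ∀ x : ℝ, (x : ℂ) ∈ U → f x = g x) :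
    EqOn f g U := by
  refine hf.eqOn_of_preconnected_of_frequently_eq hg hU hx₀ ?_
  have hreal : ∀ᶠ x : ℝ in 𝓝[≠] x₀, f x = g x :=
    nhdsWithin_le_nhds <| Eventually.mono
      (Complex.continuous_ofReal.continuousAt.preimage_mem_nhds (hUo.mem_nhds hx₀)) hfg
  have hmaps : Tendsto ((↑) : ℝ → ℂ) (𝓝[≠] x₀) (𝓝[≠] (x₀ : ℂ)) :=
    Complex.continuous_ofReal.continuousWithinAt.tendsto_nhdsWithin fun x hx => by simpa using hx
  exact hmaps.frequently hreal.frequently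

theorem integrableOn_rpow_mul_exp_neg_mul {q r : ℝ} (hq : -1 < q) (hr : 0 < r) :
    IntegrableOn (fun t : ℝ => t ^ q * rexp (-(r * t))) (Ioi 0) := by
  simpa using integrableOn_rpow_mul_exp_neg_mul_rpow hq one_pos hr

theorem integral_rpow_mul_exp_neg_mul_Ioi_eq_Gamma_mul_rpow {q r : ℝ} (hq : -1 < q)
    (hr : 0 < r) : ∫ t in Ioi 0, t ^ q * rexp (-(r * t)) = Gamma (q + 1) * r ^ (-(q + 1)) := by
  have h := integral_rpow_mul_exp_neg_mul_Ioi (a := q + 1) (by linarith) hr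
  rwa [add_sub_cancel_right, one_div, inv_rpow hr.le, ← rpow_neg hr.le, mul_comm] at h

noncomputable def rpowMeasureIoi (q : ℝ) : Measure ℝ :=
  (volume.restrict (Ioi 0)).withDensity fun t => ((t ^ q).toNNReal : ℝ≥0∞)

theorem integral_rpowMeasureIoi (q : ℝ) (g : ℝ → ℂ) :
    ∫ t, g t ∂rpowMeasureIoi q = ∫ t in Ioi 0, (t ^ q : ℝ) * g t := by
  rw [rpowMeasureIoi, integral_withDensity_eq_integral_smul (by fun_prop)]
  refine setIntegral_congr_fun measurableSet_Ioi fun t ht => ?_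
  rw [NNReal.smul_def, Real.coe_toNNReal _ (rpow_nonneg (le_of_lt ht) q), Complex.real_smul]

theorem Iio_subset_integrableExpSet_rpowMeasureIoi {q : ℝ} (hq : -1 < q) :
    Iio 0 ⊆ integrableExpSet id (rpowMeasureIoi q) := by
  intro u hu
  rw [integrableExpSet, mem_ofPred_eq, rpowMeasureIoi,
    integrable_withDensity_iff_integrable_smul (by fun_prop)]
  refine (integrableOn_rpow_mul_exp_neg_mul hq (neg_pos.2 hu)).congr_fun (fun t ht => ?_)
    measurableSet_Ioi
  simp [NNReal.smul_def, Real.coe_toNNReal _ (rpow_nonneg (le_of_lt ht) q)]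

theorem complexMGF_rpowMeasureIoi_ofReal {q : ℝ} (hq : -1 < q) {x : ℝ} (hx : x < 0) :
    complexMGF id (rpowMeasureIoi q) x = Gamma (q + 1) * (-x : ℂ) ^ ((-(q + 1) : ℝ) : ℂ) := by
  rw [complexMGF, integral_rpowMeasureIoi, ← Complex.ofReal_neg,
    ← Complex.ofReal_cpow (neg_pos.2 hx).le, ← Complex.ofReal_mul,
    ← integral_rpow_mul_exp_neg_mul_Ioi_eq_Gamma_mul_rpow hq (neg_pos.2 hx),
    ← integral_complex_ofReal]
  refine setIntegral_congr_fun measurableSet_Ioi fun t _ => ?_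
  simp [neg_mul]

theorem integral_rpow_mul_cexp_neg_mul_Ioi {q : ℝ} (hq : -1 < q) {z : ℂ} (hz : 0 < z.re) :
    ∫ t in Ioi 0, (t ^ q : ℝ) * cexp (-(z * t)) = Gamma (q + 1) * z ^ ((-(q + 1) : ℝ) : ℂ) := by
  have hopen : IsOpen {w : ℂ | w.re < 0} := isOpen_lt Complex.continuous_re continuous_const
  have hMGF : AnalyticOnNhd ℂ (complexMGF id (rpowMeasureIoi q)) {w | w.re < 0} :=
    analyticOnNhd_complexMGF.mono fun w hw =>
      interior_maximal (Iio_subset_integrableExpSet_rpowMeasureIoi hq) isOpen_Iio hw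
  have hGamma : AnalyticOnNhd ℂ (fun w : ℂ => Gamma (q + 1) * (-w) ^ ((-(q + 1) : ℝ) : ℂ))
      {w | w.re < 0} := by
    refine DifferentiableOn.analyticOnNhd (fun w hw => ?_) hopen
    refine ((differentiableAt_id.neg.cpow_const ?_).const_mul _).differentiableWithinAt
    exact Complex.mem_slitPlane_iff.2 (Or.inl (by simpa using hw))
  have h := hMGF.eqOn_of_preconnected_of_eq_ofReal hGamma
    (convex_halfSpace_re_lt 0).isPreconnected hopen (x₀ := -1) (by simp)
    (fun x hx => complexMGF_rpowMeasureIoi_ofReal hq (by simpa using hx))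
    (show (-z).re < 0 by simpa using hz)
  simpa [complexMGF, integral_rpowMeasureIoi] using h

theorem norm_rpow_mul_cexp_neg_mul {t : ℝ} (ht : 0 ≤ t) (q : ℝ) (z : ℂ) :
    ‖((t ^ q : ℝ) : ℂ) * cexp (-(z * t))‖ = t ^ q * rexp (-(z.re * t)) := by
  rw [norm_mul, Complex.norm_real, norm_of_nonneg (rpow_nonneg ht q), Complex.norm_exp]
  simp

theorem integrableOn_rpow_mul_cexp_neg_mul {q : ℝ} (hq : -1 < q) {z : ℂ} (hz : 0 < z.re) :
    IntegrableOn (fun t : ℝ => ((t ^ q : ℝ) : ℂ) * cexp (-(z * t))) (Ioi 0) := by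
  refine Integrable.mono' (integrableOn_rpow_mul_exp_neg_mul hq hz)
    (by fun_prop : Measurable _).aestronglyMeasurable ?_
  filter_upwards [self_mem_ae_restrict measurableSet_Ioi] with t ht
  exact (norm_rpow_mul_cexp_neg_mul (le_of_lt ht) q z).le

theorem Gamma_mul_nat_add_one_le {μ : ℝ} (hμ0 : 0 < μ) (hμ1 : μ < 1) (n : ℕ) :
    Gamma (μ * n + 1) ≤ (n ! : ℝ) ^ μ := by
  have h := Gamma_mul_add_mul_le_rpow_Gamma_mul_rpow_Gamma (s := n + 1) (t := 1)
    (by positivity) one_pos hμ0 (sub_pos.2 hμ1) (add_sub_cancel μ 1)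
  rw [Gamma_one, Gamma_nat_eq_factorial, one_rpow, mul_one, mul_one] at h
  calc Gamma (μ * n + 1) = Gamma (μ * (n + 1) + (1 - μ)) := by ring_nf
    _ ≤ (n ! : ℝ) ^ μ := h

theorem summable_factorial_rpow_div_factorial_mul_pow {μ : ℝ} (hμ1 : μ < 1) (C : ℝ) :
    Summable fun n : ℕ => (n ! : ℝ) ^ μ / n ! * C ^ n := by
  refine summable_of_ratio_norm_eventually_le (r := 1 / 2) (by norm_num) ?_
  have hlim : Tendsto (fun n : ℕ => ((n : ℝ) + 1) ^ (μ - 1) * ‖C‖) atTop (𝓝 0) := by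
    have h := (tendsto_rpow_neg_atTop (sub_pos.2 hμ1)).comp
      (tendsto_atTop_add_const_right _ 1 tendsto_natCast_atTop_atTop)
    simpa [neg_sub] using h.mul_const ‖C‖
  filter_upwards [hlim.eventually_le_const (by norm_num : (0 : ℝ) < 1 / 2)] with n hn
  have hratio : ((n + 1) ! : ℝ) ^ μ / (n + 1) ! * C ^ (n + 1) =
      (((n : ℝ) + 1) ^ (μ - 1) * C) * ((n ! : ℝ) ^ μ / n ! * C ^ n) := by
    rw [Nat.factorial_succ]
    push_cast
    rw [mul_rpow (by positivity) (by positivity), rpow_sub (by positivity), rpow_one, pow_succ]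
    field_simp
  rw [hratio, norm_mul, norm_mul (_ ^ _),
    norm_of_nonneg (by positivity : (0 : ℝ) ≤ ((n : ℝ) + 1) ^ (μ - 1))]
  gcongr

theorem summable_gamma_div_factorial_mul_rpow {μ : ℝ} (hμ0 : 0 < μ) (hμ1 : μ < 1) {x : ℝ}
    (hx : 0 < x) : Summable fun n : ℕ => Gamma (μ * n + 1) / n ! * x ^ (-(μ * n + 1)) := by
  have hpow (n : ℕ) : x ^ (-(μ * n + 1)) = (x ^ (-μ)) ^ n * x⁻¹ := by
    rw [← rpow_natCast, ← rpow_mul hx.le, ← rpow_neg_one, ← rpow_add hx]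
    ring_nf
  refine Summable.of_nonneg_of_le (fun n => by positivity) (fun n => ?_)
    ((summable_factorial_rpow_div_factorial_mul_pow hμ1 (x ^ (-μ))).mul_right x⁻¹)
  rw [hpow, ← mul_assoc]
  gcongr
  exact Gamma_mul_nat_add_one_le hμ0 hμ1 n

noncomputable def laplaceExpNegRpow (μ : ℝ) (z : ℂ) : ℂ :=
  ∫ t in Ioi (0 : ℝ), cexp (-((t ^ μ : ℝ) : ℂ)) * cexp (-(z * t))

noncomputable def stableCoeff (μ : ℝ) (n : ℕ) : ℝ := (-1) ^ n * Gamma (μ * n + 1) / n !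

noncomputable def stableSeries (μ : ℝ) (z : ℂ) : ℂ :=
  ∑' n : ℕ, (stableCoeff μ n : ℂ) * z ^ ((-(μ * n + 1) : ℝ) : ℂ)

theorem abs_stableCoeff {μ : ℝ} (hμ : 0 ≤ μ) (n : ℕ) :
    |stableCoeff μ n| = Gamma (μ * n + 1) / n ! := by
  rw [stableCoeff, abs_div, abs_mul, abs_pow, abs_neg, abs_one, one_pow, one_mul, Nat.abs_cast,
    abs_of_nonneg (Gamma_nonneg_of_nonneg (by positivity))]

theorem norm_stableCoeff_mul_cpow {μ : ℝ} (hμ : 0 ≤ μ) (z : ℂ) (n : ℕ) :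
    ‖(stableCoeff μ n : ℂ) * z ^ ((-(μ * n + 1) : ℝ) : ℂ)‖ =
      Gamma (μ * n + 1) / n ! * ‖z‖ ^ (-(μ * n + 1)) := by
  rw [norm_mul, Complex.norm_real, norm_eq_abs, abs_stableCoeff hμ, Complex.norm_cpow_real]

theorem summable_stableCoeff_mul_cpow {μ : ℝ} (hμ0 : 0 < μ) (hμ1 : μ < 1) {z : ℂ}
    (hz : z ≠ 0) : Summable fun n : ℕ => (stableCoeff μ n : ℂ) * z ^ ((-(μ * n + 1) : ℝ) : ℂ) :=
  Summable.of_norm <| by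
    simpa only [norm_stableCoeff_mul_cpow hμ0.le] using
      summable_gamma_div_factorial_mul_rpow hμ0 hμ1 (norm_pos_iff.2 hz)

theorem hasSum_cexp_neg_rpow_mul {t : ℝ} (ht : 0 ≤ t) (μ : ℝ) (z : ℂ) :
    HasSum (fun n : ℕ => (((-1) ^ n / n ! : ℝ) : ℂ) * (((t ^ (μ * n) : ℝ) : ℂ) * cexp (-(z * t))))
      (cexp (-((t ^ μ : ℝ) : ℂ)) * cexp (-(z * t))) := by
  have h := (NormedSpace.expSeries_div_hasSum_exp (-((t ^ μ : ℝ) : ℂ))).mul_right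
    (cexp (-(z * t)))
  rw [← Complex.exp_eq_exp_ℂ] at h
  refine h.congr_fun fun n => ?_
  rw [rpow_mul ht, rpow_natCast, neg_pow]
  push_cast
  ring

theorem hasSum_laplaceExpNegRpow {μ : ℝ} (hμ0 : 0 < μ) (hμ1 : μ < 1) {z : ℂ} (hz : 0 < z.re) :
    HasSum (fun n : ℕ => (stableCoeff μ n : ℂ) * z ^ ((-(μ * n + 1) : ℝ) : ℂ))
      (laplaceExpNegRpow μ z) := by
  set F : ℕ → ℝ → ℂ := fun n t =>
    (((-1) ^ n / n ! : ℝ) : ℂ) * (((t ^ (μ * n) : ℝ) : ℂ) * cexp (-(z * t))) with hF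
  have hq (n : ℕ) : -1 < μ * n := by linarith [show 0 ≤ μ * n by positivity]
  have hF_int (n : ℕ) : Integrable (F n) (volume.restrict (Ioi 0)) :=
    (integrableOn_rpow_mul_cexp_neg_mul (hq n) hz).const_mul _
  have hF_norm (n : ℕ) :
      ∫ t in Ioi 0, ‖F n t‖ = Gamma (μ * n + 1) / n ! * z.re ^ (-(μ * n + 1)) := by
    calc ∫ t in Ioi 0, ‖F n t‖
        = ∫ t in Ioi 0, (n ! : ℝ)⁻¹ * (t ^ (μ * n) * rexp (-(z.re * t))) := by
          refine setIntegral_congr_fun measurableSet_Ioi fun t ht => ?_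
          rw [hF, norm_mul, norm_rpow_mul_cexp_neg_mul (le_of_lt ht), Complex.norm_real]
          simp
      _ = Gamma (μ * n + 1) / n ! * z.re ^ (-(μ * n + 1)) := by
          rw [integral_const_mul, integral_rpow_mul_exp_neg_mul_Ioi_eq_Gamma_mul_rpow (hq n) hz]
          ring
  have hsum := hasSum_integral_of_summable_integral_norm hF_int
    (by simpa only [hF_norm] using summable_gamma_div_factorial_mul_rpow hμ0 hμ1 hz)
  rw [setIntegral_congr_fun measurableSet_Ioi
    fun t ht => (hasSum_cexp_neg_rpow_mul (le_of_lt ht) μ z).tsum_eq] at hsum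
  refine hsum.congr_fun fun n => ?_
  rw [hF, integral_const_mul, integral_rpow_mul_cexp_neg_mul_Ioi (hq n) hz, stableCoeff]
  push_cast
  ring

theorem integrableOn_exp_neg_rpow {μ : ℝ} (hμ : 0 < μ) :
    IntegrableOn (fun t : ℝ => rexp (-(t ^ μ))) (Ioi 0) := by
  simpa using integrableOn_rpow_mul_exp_neg_rpow neg_one_lt_zero hμ

theorem continuousOn_laplaceExpNegRpow {μ : ℝ} (hμ : 0 < μ) :
    ContinuousOn (laplaceExpNegRpow μ) {z | 0 ≤ z.re} := by
  refine continuousOn_of_dominated (fun z _ => (by fun_prop : Measurable _).aestronglyMeasurable)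
    (fun z hz => ?_) (integrableOn_exp_neg_rpow hμ)
    (ae_of_all _ fun t => (by fun_prop : Continuous _).continuousOn)
  filter_upwards [self_mem_ae_restrict measurableSet_Ioi] with t ht
  rw [norm_mul, Complex.norm_exp, Complex.norm_exp]
  simp only [Complex.neg_re, Complex.ofReal_re, Complex.mul_re, Complex.ofReal_im, mul_zero,
    sub_zero]
  exact mul_le_of_le_one_right (exp_pos _).le
    (exp_le_one_iff.2 (neg_nonpos.2 (mul_nonneg hz (le_of_lt ht))))

theorem mem_slitPlane_of_re_nonneg {z : ℂ} (hre : 0 ≤ z.re) (hz : z ≠ 0) :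
    z ∈ Complex.slitPlane := by
  rcases hre.lt_or_eq with h | h
  · exact Or.inl h
  · exact Or.inr fun him => hz (Complex.ext h.symm him)

theorem continuousOn_stableSeries {μ : ℝ} (hμ0 : 0 < μ) (hμ1 : μ < 1) {c : ℝ} (hc : 0 < c) :
    ContinuousOn (stableSeries μ) {z | 0 ≤ z.re ∧ c ≤ ‖z‖} := by
  refine continuousOn_tsum (fun n z hz => ?_) (summable_gamma_div_factorial_mul_rpow hμ0 hμ1 hc)
    (fun n z hz => ?_)
  · have hz0 : z ≠ 0 := norm_pos_iff.1 (hc.trans_le hz.2)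
    exact (continuousAt_const.mul
      (continuousAt_cpow_const (mem_slitPlane_of_re_nonneg hz.1 hz0))).continuousWithinAt
  · rw [norm_stableCoeff_mul_cpow hμ0.le]
    exact mul_le_mul_of_nonneg_left
      (rpow_le_rpow_of_nonpos hc hz.2 (by linarith [show 0 ≤ μ * n by positivity]))
      (by positivity)

theorem norm_le_norm_add_ofReal {w : ℂ} (hw : 0 ≤ w.re) {ε : ℝ} (hε : 0 ≤ ε) :
    ‖w‖ ≤ ‖w + ε‖ := by
  rw [← sq_le_sq₀ (norm_nonneg _) (norm_nonneg _), Complex.sq_norm, Complex.sq_norm,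
    Complex.normSq_apply, Complex.normSq_apply]
  simp only [Complex.add_re, Complex.ofReal_re, Complex.add_im, Complex.ofReal_im, add_zero]
  nlinarith

theorem laplaceExpNegRpow_eq_stableSeries {μ : ℝ} (hμ0 : 0 < μ) (hμ1 : μ < 1) {w : ℂ}
    (hw₀ : 0 ≤ w.re) (hw : w ≠ 0) : laplaceExpNegRpow μ w = stableSeries μ w := by
  set K := {z : ℂ | 0 ≤ z.re ∧ ‖w‖ ≤ ‖z‖}
  have hpath : Tendsto (fun ε : ℝ => w + ε) (𝓝[>] 0) (𝓝[K] w) := by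
    refine tendsto_nhdsWithin_iff.2 ⟨?_, eventually_mem_nhdsWithin.mono fun ε hε => ?_⟩
    · exact ((by fun_prop : Continuous fun ε : ℝ => w + ε).tendsto' 0 w (by simp)).mono_left
        nhdsWithin_le_nhds
    · exact ⟨by simpa using add_nonneg hw₀ (le_of_lt hε),
        norm_le_norm_add_ofReal hw₀ (le_of_lt hε)⟩
  have hpos : ∀ᶠ ε : ℝ in 𝓝[>] 0, laplaceExpNegRpow μ (w + ε) = stableSeries μ (w + ε) :=
    eventually_mem_nhdsWithin.mono fun ε hε => (hasSum_laplaceExpNegRpow hμ0 hμ1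
      (by simpa using add_pos_of_nonneg_of_pos hw₀ hε)).tsum_eq.symm
  have hL := ((continuousOn_laplaceExpNegRpow hμ0).mono fun z (hz : z ∈ K) => hz.1) w
    ⟨hw₀, le_rfl⟩
  have hS := continuousOn_stableSeries hμ0 hμ1 (norm_pos_iff.2 hw) w ⟨hw₀, le_rfl⟩
  exact tendsto_nhds_unique ((hL.tendsto.comp hpath).congr' hpos) (hS.tendsto.comp hpath)

theorem integrable_comp_abs {E : Type*} [NormedAddCommGroup E] {g : ℝ → E}
    (hg : IntegrableOn g (Ioi 0)) : Integrable fun x => g |x| := by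
  rw [← integrableOn_univ, ← Iio_union_Ici (a := (0 : ℝ)), integrableOn_union,
    integrableOn_Ici_iff_integrableOn_Ioi]
  constructor
  · have hneg : IntegrableOn (fun x => g (-x)) (Iio 0) :=
      IntegrableOn.comp_neg_Iio (c := 0) (by rwa [neg_zero])
    exact hneg.congr_fun (fun x hx => by rw [abs_of_neg hx]) measurableSet_Iio
  · exact hg.congr_fun (fun x hx => by rw [abs_of_pos hx]) measurableSet_Ioi

theorem integral_eq_two_mul_re_setIntegral_Ioi {f : ℝ → ℂ} (hf : Integrable f)
    (hconj : ∀ x, f (-x) = conj (f x)) : ∫ x, f x = 2 * (∫ x in Ioi 0, f x).re := by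
  have hIic : ∫ x in Iic 0, f x = conj (∫ x in Ioi 0, f x) := by
    rw [← neg_zero, ← integral_comp_neg_Ioi, ← integral_conj]
    simp_rw [hconj, neg_zero]
  rw [← intervalIntegral.integral_Iic_add_Ioi hf.integrableOn hf.integrableOn, hIic, add_comm,
    Complex.add_conj]
  push_cast
  ring

theorem integral_cexp_neg_abs_rpow_mul_cexp {μ : ℝ} (hμ : 0 < μ) (x : ℝ) :
    ∫ k : ℝ, cexp (-((|k| ^ μ : ℝ) : ℂ)) * cexp (-(Complex.I * k * x)) =
      2 * (laplaceExpNegRpow μ (Complex.I * x)).re := by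
  have hint : Integrable fun k : ℝ =>
      cexp (-((|k| ^ μ : ℝ) : ℂ)) * cexp (-(Complex.I * k * x)) := by
    refine (integrable_comp_abs (integrableOn_exp_neg_rpow hμ)).mono'
      (by fun_prop : Measurable _).aestronglyMeasurable (ae_of_all _ fun k => ?_)
    rw [norm_mul, Complex.norm_exp, Complex.norm_exp]
    simp
  rw [integral_eq_two_mul_re_setIntegral_Ioi hint fun k => by simp [← Complex.exp_conj],
    laplaceExpNegRpow]
  congr 3
  refine setIntegral_congr_fun measurableSet_Ioi fun k hk => ?_
  rw [abs_of_pos hk, mul_right_comm]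

theorem re_I_mul_ofReal_cpow {x : ℝ} (hx : 0 < x) (s : ℝ) :
    ((Complex.I * x) ^ (s : ℂ)).re = x ^ s * cos (π * s / 2) := by
  have hlog : Complex.log (Complex.I * x) = (Real.log x : ℂ) + ((π / 2 : ℝ) : ℂ) * Complex.I := by
    refine Complex.ext ?_ ?_
    · simp [Complex.log_re, abs_of_pos hx]
    · simp [Complex.log_im, Complex.arg_mul_real hx]
  rw [Complex.cpow_def_of_ne_zero (by simp [hx.ne']), hlog, Complex.exp_re]
  simp only [Complex.mul_re, Complex.add_re, Complex.add_im, Complex.ofReal_re,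
    Complex.ofReal_im, Complex.mul_im, Complex.I_re, Complex.I_im]
  rw [rpow_def_of_pos hx]
  ring_nf

noncomputable def stableDensityTerm (μ x : ℝ) (n : ℕ) : ℝ :=
  (-1) ^ (n + 1) / n ! * sin (π * μ * n / 2) * Gamma (μ * n + 1) * x ^ (-(μ * n + 1))

theorem re_stableCoeff_mul_I_mul_cpow (μ : ℝ) {x : ℝ} (hx : 0 < x) (n : ℕ) :
    ((stableCoeff μ n : ℂ) * (Complex.I * x) ^ ((-(μ * n + 1) : ℝ) : ℂ)).re =
      stableDensityTerm μ x n := by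
  rw [Complex.re_ofReal_mul, re_I_mul_ofReal_cpow hx, stableCoeff, stableDensityTerm,
    show π * -(μ * n + 1) / 2 = -(π * μ * n / 2 + π / 2) by ring, cos_neg, cos_add_pi_div_two]
  ring

theorem summable_abs_stableDensityTerm {μ : ℝ} (hμ0 : 0 < μ) (hμ1 : μ < 1) {x : ℝ}
    (hx : 0 < x) : Summable fun n => |stableDensityTerm μ x n| := by
  refine Summable.of_nonneg_of_le (fun n => abs_nonneg _) (fun n => ?_)
    (summable_gamma_div_factorial_mul_rpow hμ0 hμ1 hx)
  rw [← re_stableCoeff_mul_I_mul_cpow μ hx]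
  refine (Complex.abs_re_le_norm _).trans_eq ?_
  rw [norm_stableCoeff_mul_cpow hμ0.le, norm_mul, Complex.norm_I, one_mul, Complex.norm_real,
    norm_of_nonneg hx.le]

theorem re_laplaceExpNegRpow_I_mul {μ : ℝ} (hμ0 : 0 < μ) (hμ1 : μ < 1) {x : ℝ} (hx : 0 < x) :
    (laplaceExpNegRpow μ (Complex.I * x)).re = ∑' n, stableDensityTerm μ x (n + 1) := by
  have hIx : Complex.I * x ≠ 0 := by simp [hx.ne']
  rw [laplaceExpNegRpow_eq_stableSeries hμ0 hμ1 (by simp) hIx, stableSeries,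
    Complex.re_tsum (summable_stableCoeff_mul_cpow hμ0 hμ1 hIx)]
  simp_rw [re_stableCoeff_mul_I_mul_cpow μ hx]
  rw [(summable_abs_stableDensityTerm hμ0 hμ1 hx).of_abs.tsum_eq_zero_add]
  simp [stableDensityTerm]

/-- Asymptotic series expansion of the symmetric stable density: for `0 < μ < 1` and `x > 0`,
`(1/2π) ∫ e^{-|k|^μ} e^{-ikx} dk = (1/π) Σ_{n≥1} ((-1)^{n+1}/n!) sin(πμn/2) Γ(μn+1) x^{-(μn+1)}`,
and the series converges absolutely. -/
theorem stmt5 (μ : ℝ) (hμ0 : 0 < μ) (hμ1 : μ < 1) (x : ℝ) (hx : 0 < x) :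
    Summable (fun n : ℕ =>
      |((-1 : ℝ) ^ (n + 1 + 1) / (Nat.factorial (n + 1))) *
        Real.sin (π * μ * (n + 1) / 2) * Real.Gamma (μ * (n + 1) + 1) *
        x ^ (-(μ * (n + 1) + 1))|) ∧
    (1 / (2 * π) : ℂ) * ∫ k : ℝ, Complex.exp (-((|k| ^ μ : ℝ) : ℂ)) *
        Complex.exp (-(Complex.I * (k : ℂ) * (x : ℂ))) =
      (((1 / π) * ∑' n : ℕ,
        ((-1 : ℝ) ^ (n + 1 + 1) / (Nat.factorial (n + 1))) *
          Real.sin (π * μ * (n + 1) / 2) * Real.Gamma (μ * (n + 1) + 1) *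
          x ^ (-(μ * (n + 1) + 1)) : ℝ) : ℂ) := by
  have hterm (n : ℕ) : (-1 : ℝ) ^ (n + 1 + 1) / (Nat.factorial (n + 1)) *
      sin (π * μ * (n + 1) / 2) * Gamma (μ * (n + 1) + 1) * x ^ (-(μ * (n + 1) + 1)) =
      stableDensityTerm μ x (n + 1) := by
    simp [stableDensityTerm]
  simp only [hterm]
  refine ⟨(summable_nat_add_iff 1).2 (summable_abs_stableDensityTerm hμ0 hμ1 hx), ?_⟩
  rw [integral_cexp_neg_abs_rpow_mul_cexp hμ0, re_laplaceExpNegRpow_I_mul hμ0 hμ1 hx]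
  push_cast
  field_simp
end

section
/- Let n ≥ 3 be an odd integer, let 𝔨 > 0 and 𝔩 ∈ ℝ. Then the improper oscillatory integral lim_{R→∞} ∫_{-R}^{R} exp(i(𝔨 w^n − 𝔩 w)) dw exists and equals 2 Re[ e^{iπ/(2n)} ∫_0^∞ exp(−𝔨 ξ^n + e^{-iπ(n−1)/(2n)} 𝔩 ξ) dξ ]; moreover the integral inside the real part converges absolutely. -/
/-!
For odd `n` the integrand `e^{i(𝔨 w^n - 𝔩 w)}` takes conjugate values at `w` and `-w`, so
`∫_{-R}^R` is twice the real part of `∫_0^R`. The integrand extends to an entire function, and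
Cauchy's theorem on the sector `|z| ≤ R`, `0 ≤ arg z ≤ π/(2n)` moves `∫_0^R` onto the ray
`arg z = π/(2n)`, on which `z^n = i ξ^n` turns the oscillation into the decay `e^{-𝔨 ξ^n}`.
On the arc, `sin (nθ) ≥ θ` bounds the integrand by `e^{-𝔨 R^n θ / 2}` once `R` is large, so the
arc contributes `O(R^{1-n})`.
-/

open MeasureTheory Real Filter Complex ComplexConjugate Topology

theorem integral_sub_eq_integral_sub_of_hasDerivAt_mixed {E : Type*} [NormedAddCommGroup E]
    [NormedSpace ℝ E] [CompleteSpace E] {F H v : ℝ → ℝ → E} {a b c d : ℝ}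
    (hab : a ≤ b) (hcd : c ≤ d) (hv : Continuous (Function.uncurry v))
    (hF : ∀ x y, HasDerivAt (F · y) (v x y) x) (hH : ∀ x y, HasDerivAt (H x ·) (v x y) y) :
    ∫ y in c..d, (F b y - F a y) = ∫ x in a..b, (H x d - H x c) := by
  have hvx : ∀ y, Continuous (v · y) := fun y => hv.comp (.prodMk_left y)
  have hvy : ∀ x, Continuous (v x) := fun x => hv.comp (.prodMk_right x)
  have hswap : ∫ y in c..d, ∫ x in a..b, v x y = ∫ x in a..b, ∫ y in c..d, v x y := by
    simp only [intervalIntegral.integral_of_le hab, intervalIntegral.integral_of_le hcd]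
    refine (integral_integral_swap ?_).symm
    rw [Measure.prod_restrict, ← Measure.volume_eq_prod]
    exact (hv.continuousOn.integrableOn_compact (isCompact_Icc.prod isCompact_Icc)).mono_set
      (Set.prod_mono Set.Ioc_subset_Icc_self Set.Ioc_subset_Icc_self)
  calc ∫ y in c..d, (F b y - F a y) = ∫ y in c..d, ∫ x in a..b, v x y := by
        refine intervalIntegral.integral_congr fun y _ => ?_
        exact (intervalIntegral.integral_eq_sub_of_hasDerivAt (fun x _ => hF x y)
          ((hvx y).intervalIntegrable a b)).symm
    _ = ∫ x in a..b, ∫ y in c..d, v x y := hswap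
    _ = ∫ x in a..b, (H x d - H x c) := by
        refine intervalIntegral.integral_congr fun x _ => ?_
        exact intervalIntegral.integral_eq_sub_of_hasDerivAt (fun y _ => hH x y)
          ((hvy x).intervalIntegrable c d)

theorem hasDerivAt_exp_ofReal_mul_I (θ : ℝ) :
    HasDerivAt (fun θ : ℝ => exp (θ * I)) (I * exp (θ * I)) θ := by
  simpa [mul_comm] using ((hasDerivAt_id (θ : ℝ)).ofReal_comp.mul_const I).cexp

/-- Cauchy's theorem for a sector: in polar coordinates `z = ξ e^{iθ}` the `θ`-derivative of
`e^{iθ} g z` equals the `ξ`-derivative of `i ξ e^{iθ} g z`, and Fubini does the rest. -/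
theorem integral_ray_sub_integral_eq_integral_arc {g : ℂ → ℂ} (hg : Differentiable ℂ g)
    {R α : ℝ} (hR : 0 ≤ R) (hα : 0 ≤ α) :
    (exp (α * I) * ∫ ξ in 0..R, g (ξ * exp (α * I))) - ∫ ξ in 0..R, g ξ =
      ∫ θ in 0..α, I * R * exp (θ * I) * g (R * exp (θ * I)) := by
  have hgc : Continuous g := hg.continuous
  have hg' : Continuous (deriv g) := hg.contDiff.continuous_deriv le_rfl
  have hF (θ ξ : ℝ) : HasDerivAt (fun θ : ℝ => exp (θ * I) * g (ξ * exp (θ * I)))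
      (I * exp (θ * I) * (g (ξ * exp (θ * I)) + ξ * exp (θ * I) * deriv g (ξ * exp (θ * I))))
      θ := by
    refine ((hasDerivAt_exp_ofReal_mul_I θ).mul ((hg _).hasDerivAt.comp θ
      ((hasDerivAt_exp_ofReal_mul_I θ).const_mul (ξ : ℂ)))).congr_deriv ?_
    simp only [Function.comp_apply]
    ring
  have hH (θ ξ : ℝ) : HasDerivAt (fun ξ : ℝ => I * ξ * exp (θ * I) * g (ξ * exp (θ * I)))
      (I * exp (θ * I) * (g (ξ * exp (θ * I)) + ξ * exp (θ * I) * deriv g (ξ * exp (θ * I))))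
      ξ := by
    refine ((((hasDerivAt_id ξ).ofReal_comp.const_mul I).mul_const (exp (θ * I)))).mul
      ((hg _).hasDerivAt.comp ξ ((hasDerivAt_id ξ).ofReal_comp.mul_const (exp (θ * I))))
      |>.congr_deriv ?_
    simp only [Function.comp_apply, id_eq, ofReal_one]
    ring
  have hv : Continuous (Function.uncurry fun θ ξ : ℝ =>
      I * exp (θ * I) * (g (ξ * exp (θ * I)) + ξ * exp (θ * I) * deriv g (ξ * exp (θ * I)))) := by
    fun_prop
  have key := integral_sub_eq_integral_sub_of_hasDerivAt_mixed hα hR hv hF hH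
  simp only [ofReal_zero, zero_mul, Complex.exp_zero, one_mul, mul_one, mul_zero, sub_zero] at key
  rw [← key, intervalIntegral.integral_sub, intervalIntegral.integral_const_mul]
  all_goals exact Continuous.intervalIntegrable (by fun_prop) _ _

theorem integral_symm_interval_eq_two_mul_re {f : ℝ → ℂ} (hf : Continuous f)
    (hconj : ∀ x, f (-x) = conj (f x)) (R : ℝ) :
    ∫ x in -R..R, f x = ((2 * (∫ x in 0..R, f x).re : ℝ) : ℂ) := by
  have hneg : ∫ x in -R..0, f x = conj (∫ x in 0..R, f x) := by
    rw [← neg_zero, ← intervalIntegral.integral_comp_neg, neg_zero]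
    simp only [hconj, intervalIntegral, integral_conj, map_sub]
  rw [← intervalIntegral.integral_add_adjacent_intervals (b := 0) (hf.intervalIntegrable _ _)
    (hf.intervalIntegrable _ _), hneg, add_comm, add_conj]

theorem eventually_mul_le_mul_pow {n : ℕ} (hn : 2 ≤ n) {k : ℝ} (hk : 0 < k) (b : ℝ) :
    ∀ᶠ x in atTop, b * x ≤ k * x ^ n := by
  filter_upwards [eventually_ge_atTop 1, eventually_ge_atTop (b / k)] with x hx1 hxb
  have hbx : b ≤ k * x := by rwa [div_le_iff₀' hk] at hxb
  calc b * x ≤ k * x * x := by gcongr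
    _ = k * x ^ 2 := by ring
    _ ≤ k * x ^ n := by gcongr

theorem integrableOn_exp_neg_mul_pow_add_mul {n : ℕ} (hn : 2 ≤ n) {k : ℝ} (hk : 0 < k)
    (b a : ℝ) : IntegrableOn (fun x => Real.exp (-(k * x ^ n) + b * x)) (Set.Ioi a) := by
  refine integrable_of_isBigO_exp_neg one_pos (by fun_prop) (Asymptotics.IsBigO.of_bound 1 ?_)
  filter_upwards [eventually_mul_le_mul_pow hn hk (b + 1)] with x hx
  simp only [Real.norm_eq_abs, Real.abs_exp, one_mul, neg_mul]
  gcongr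
  linarith

theorem le_sin_nat_mul {n : ℕ} (hn : 2 ≤ n) {θ : ℝ} (hθ : 0 ≤ θ) (hnθ : n * θ ≤ π / 2) :
    θ ≤ Real.sin (n * θ) := by
  have hn' : (2 : ℝ) ≤ n := by exact_mod_cast hn
  have hjordan := Real.mul_le_sin (by positivity) hnθ
  rw [div_mul_eq_mul_div, div_le_iff₀ pi_pos] at hjordan
  refine le_of_mul_le_mul_right ?_ pi_pos
  nlinarith [pi_le_four]

theorem integral_exp_neg_mul_le {k : ℝ} (hk : 0 < k) {α : ℝ} (hα : 0 ≤ α) :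
    ∫ θ in 0..α, Real.exp (-k * θ) ≤ 1 / k := by
  rw [intervalIntegral.integral_of_le hα]
  calc ∫ θ in Set.Ioc 0 α, Real.exp (-k * θ)
      ≤ ∫ θ in Set.Ioi 0, Real.exp (-k * θ) :=
        setIntegral_mono_set (integrableOn_exp_mul_Ioi (by linarith) 0)
          (.of_forall fun _ => (Real.exp_pos _).le) Set.Ioc_subset_Ioi_self.eventuallyLE
    _ = 1 / k := by rw [integral_exp_mul_Ioi (by linarith), mul_zero, Real.exp_zero, neg_div_neg_eq]

noncomputable def kernelIntegrand (n : ℕ) (𝔨 𝔩 : ℝ) (z : ℂ) : ℂ :=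
  exp (I * (𝔨 * z ^ n - 𝔩 * z))

section kernelIntegrand

variable {n : ℕ} {𝔨 𝔩 : ℝ}

theorem differentiable_kernelIntegrand : Differentiable ℂ (kernelIntegrand n 𝔨 𝔩) := by
  unfold kernelIntegrand
  fun_prop

theorem kernelIntegrand_neg_ofReal (hn : Odd n) (x : ℝ) :
    kernelIntegrand n 𝔨 𝔩 (-x) = conj (kernelIntegrand n 𝔨 𝔩 x) := by
  simp only [kernelIntegrand, ← exp_conj, map_mul, map_sub, map_pow, conj_I, conj_ofReal,
    hn.neg_pow]
  ring_nf

theorem norm_kernelIntegrand_polar (R θ : ℝ) :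
    ‖kernelIntegrand n 𝔨 𝔩 (R * exp (θ * I))‖ =
      Real.exp (-(𝔨 * R ^ n * Real.sin (n * θ)) + 𝔩 * R * Real.sin θ) := by
  have hangle : (n : ℂ) * (θ * I) = (n * θ : ℝ) * I := by push_cast; ring
  rw [kernelIntegrand, norm_exp, mul_pow, ← Complex.exp_nat_mul, hangle, exp_ofReal_mul_I,
    exp_ofReal_mul_I]
  simp only [mul_re, mul_im, sub_re, sub_im, add_re, add_im, I_re, I_im, ofReal_re, ofReal_im,
    ← ofReal_pow]
  ring_nf

theorem kernelIntegrand_wickRay (hn : n ≠ 0) (ξ : ℝ) :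
    kernelIntegrand n 𝔨 𝔩 (ξ * exp ((π / (2 * n) : ℝ) * I)) =
      exp (-((𝔨 * ξ ^ n : ℝ) : ℂ) + exp (-(I * π * ((n : ℂ) - 1) / (2 * n))) * 𝔩 * ξ) := by
  have hn' : (n : ℂ) ≠ 0 := Nat.cast_ne_zero.2 hn
  have hpow : exp ((π / (2 * n) : ℝ) * I) ^ n = I := by
    have hangle : (n : ℂ) * ((π / (2 * n) : ℝ) * I) = π / 2 * I := by push_cast; field_simp
    rw [← Complex.exp_nat_mul, hangle, exp_pi_div_two_mul_I]
  have hrot : exp (-(I * π * ((n : ℂ) - 1) / (2 * n))) = -I * exp ((π / (2 * n) : ℝ) * I) := by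
    rw [← exp_neg_pi_div_two_mul_I, ← Complex.exp_add]
    congr 1
    push_cast
    field_simp
    ring
  rw [kernelIntegrand, mul_pow, hpow, hrot]
  congr 1
  push_cast
  linear_combination 𝔨 * ξ ^ n * I_sq

theorem norm_kernelIntegrand_arc_le (hn : 2 ≤ n) {R θ : ℝ} (hR : 0 ≤ R)
    (hRn : 2 * |𝔩| * R ≤ 𝔨 * R ^ n) (hθ : 0 ≤ θ) (hnθ : n * θ ≤ π / 2) :
    ‖kernelIntegrand n 𝔨 𝔩 (R * exp (θ * I))‖ ≤ Real.exp (-(𝔨 * R ^ n / 2) * θ) := by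
  rw [norm_kernelIntegrand_polar]
  gcongr
  have hsin : 𝔩 * R * Real.sin θ ≤ |𝔩| * R * θ := by
    calc 𝔩 * R * Real.sin θ ≤ |𝔩 * R * Real.sin θ| := le_abs_self _
      _ = |𝔩| * R * |Real.sin θ| := by rw [abs_mul, abs_mul, abs_of_nonneg hR]
      _ ≤ |𝔩| * R * θ := by
        gcongr
        simpa [abs_of_nonneg hθ] using abs_sin_le_abs (x := θ)
  have hK : 0 ≤ 𝔨 * R ^ n := le_trans (by positivity) hRn
  have h1 := mul_le_mul_of_nonneg_left (le_sin_nat_mul hn hθ hnθ) hK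
  have h2 := mul_le_mul_of_nonneg_right hRn hθ
  linarith

theorem tendsto_integral_arc_kernelIntegrand (hn : 2 ≤ n) (h𝔨 : 0 < 𝔨) :
    Tendsto (fun R : ℝ => ∫ θ in 0..π / (2 * n),
      I * R * exp (θ * I) * kernelIntegrand n 𝔨 𝔩 (R * exp (θ * I))) atTop (𝓝 0) := by
  have hα : 0 ≤ π / (2 * n) := by positivity
  have hdecay : Tendsto (fun R : ℝ => 2 / 𝔨 * (R ^ 1 / R ^ n)) atTop (𝓝 0) := by
    simpa using (tendsto_pow_div_pow_atTop_zero (𝕜 := ℝ) (by omega : 1 < n)).const_mul (2 / 𝔨)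
  refine squeeze_zero_norm' ?_ hdecay
  filter_upwards [eventually_gt_atTop 0, eventually_mul_le_mul_pow hn h𝔨 (2 * |𝔩|)]
    with R hR hRn
  have hk : 0 < 𝔨 * R ^ n / 2 := by positivity
  calc _ ≤ ∫ θ in 0..π / (2 * n), R * Real.exp (-(𝔨 * R ^ n / 2) * θ) := by
        refine intervalIntegral.norm_integral_le_of_norm_le hα
          (.of_forall fun θ hθ => ?_) (Continuous.intervalIntegrable (by fun_prop) _ _)
        rw [norm_mul, norm_mul, norm_mul, norm_I, norm_real, norm_exp_ofReal_mul_I,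
          Real.norm_of_nonneg hR.le, one_mul, mul_one]
        gcongr
        refine norm_kernelIntegrand_arc_le hn hR.le hRn hθ.1.le ?_
        calc (n : ℝ) * θ ≤ n * (π / (2 * n)) := by gcongr; exact hθ.2
          _ = π / 2 := by field_simp
    _ = R * ∫ θ in 0..π / (2 * n), Real.exp (-(𝔨 * R ^ n / 2) * θ) :=
        intervalIntegral.integral_const_mul _ _
    _ ≤ R * (1 / (𝔨 * R ^ n / 2)) := by gcongr; exact integral_exp_neg_mul_le hk hα
    _ = 2 / 𝔨 * (R ^ 1 / R ^ n) := by field_simp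

theorem integrableOn_kernelIntegrand_wickRay (hn : 2 ≤ n) (h𝔨 : 0 < 𝔨) :
    IntegrableOn (fun ξ : ℝ => kernelIntegrand n 𝔨 𝔩 (ξ * exp ((π / (2 * n) : ℝ) * I)))
      (Set.Ioi 0) := by
  refine (integrableOn_exp_neg_mul_pow_add_mul hn h𝔨 |𝔩| 0).mono'
    ((differentiable_kernelIntegrand.continuous.comp (by fun_prop)).aestronglyMeasurable)
    (ae_restrict_of_forall_mem measurableSet_Ioi fun ξ (hξ : 0 < ξ) => ?_)
  have hnα : (n : ℝ) * (π / (2 * n)) = π / 2 := by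
    have : (n : ℝ) ≠ 0 := by positivity
    field_simp
  rw [norm_kernelIntegrand_polar, hnα, Real.sin_pi_div_two, mul_one]
  gcongr Real.exp (_ + ?_)
  calc 𝔩 * ξ * Real.sin (π / (2 * n)) ≤ |𝔩 * ξ * Real.sin (π / (2 * n))| := le_abs_self _
    _ = |𝔩| * ξ * |Real.sin (π / (2 * n))| := by rw [abs_mul, abs_mul, abs_of_pos hξ]
    _ ≤ |𝔩| * ξ := mul_le_of_le_one_right (by positivity) (abs_sin_le_one _)

theorem tendsto_integral_kernelIntegrand (hn : 2 ≤ n) (h𝔨 : 0 < 𝔨) :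
    Tendsto (fun R : ℝ => ∫ w in 0..R, kernelIntegrand n 𝔨 𝔩 w) atTop
      (𝓝 (exp ((π / (2 * n) : ℝ) * I) *
        ∫ ξ : ℝ in Set.Ioi 0, kernelIntegrand n 𝔨 𝔩 (ξ * exp ((π / (2 * n) : ℝ) * I)))) := by
  have hray := (intervalIntegral_tendsto_integral_Ioi 0
    (integrableOn_kernelIntegrand_wickRay (𝔩 := 𝔩) hn h𝔨) tendsto_id).const_mul
      (exp ((π / (2 * n) : ℝ) * I))
  have hsector := hray.sub (tendsto_integral_arc_kernelIntegrand (𝔩 := 𝔩) hn h𝔨)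
  rw [sub_zero] at hsector
  refine hsector.congr' ?_
  filter_upwards [eventually_ge_atTop 0] with R hR
  rw [← integral_ray_sub_integral_eq_integral_arc differentiable_kernelIntegrand hR
    (by positivity)]
  exact sub_sub_cancel _ _

end kernelIntegrand

/-- Wick rotation of the kernel integral, odd case: for `n ≥ 3` odd, `𝔨 > 0`, `𝔩 ∈ ℝ`,
`lim_{R→∞} ∫_{-R}^R e^{i(𝔨 w^n - 𝔩 w)} dw
  = 2 Re[e^{iπ/(2n)} ∫_0^∞ exp(-𝔨 ξ^n + e^{-iπ(n-1)/(2n)} 𝔩 ξ) dξ]`,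
where the integral inside the real part converges absolutely. -/
theorem stmt8 (n : ℕ) (hn : 3 ≤ n) (hnodd : Odd n) (𝔨 : ℝ) (h𝔨 : 0 < 𝔨) (𝔩 : ℝ) :
    IntegrableOn (fun ξ : ℝ =>
      Complex.exp (-((𝔨 * ξ ^ n : ℝ) : ℂ) +
        Complex.exp (-(Complex.I * π * ((n : ℂ) - 1) / (2 * n))) * (𝔩 : ℂ) * (ξ : ℂ)))
      (Set.Ioi 0) ∧
    Tendsto (fun R : ℝ => ∫ w in (-R)..R,
        Complex.exp (Complex.I * ((𝔨 : ℂ) * (w : ℂ) ^ n - (𝔩 : ℂ) * (w : ℂ))))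
      atTop
      (nhds (((2 * (Complex.exp (Complex.I * π / (2 * n)) *
        ∫ ξ in Set.Ioi (0 : ℝ),
          Complex.exp (-((𝔨 * ξ ^ n : ℝ) : ℂ) +
            Complex.exp (-(Complex.I * π * ((n : ℂ) - 1) / (2 * n))) *
              (𝔩 : ℂ) * (ξ : ℂ)))).re : ℝ) : ℂ)) := by
  have hn2 : 2 ≤ n := by omega
  have hray : (fun ξ : ℝ => exp (-((𝔨 * ξ ^ n : ℝ) : ℂ) +
      exp (-(I * π * ((n : ℂ) - 1) / (2 * n))) * 𝔩 * ξ)) =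
      fun ξ : ℝ => kernelIntegrand n 𝔨 𝔩 (ξ * exp ((π / (2 * n) : ℝ) * I)) :=
    funext fun ξ => (kernelIntegrand_wickRay (by omega) ξ).symm
  have hangle : I * π / (2 * n) = (π / (2 * n) : ℝ) * I := by push_cast; ring
  refine ⟨hray ▸ integrableOn_kernelIntegrand_wickRay hn2 h𝔨, ?_⟩
  have hlim := (continuous_ofReal.tendsto _).comp (((continuous_re.tendsto _).comp
    (tendsto_integral_kernelIntegrand (𝔩 := 𝔩) hn2 h𝔨)).const_mul 2)
  rw [hray, hangle, mul_re, re_ofNat, im_ofNat, zero_mul, sub_zero]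
  refine hlim.congr fun R => ?_
  refine (integral_symm_interval_eq_two_mul_re
    (differentiable_kernelIntegrand.continuous.comp continuous_ofReal) (fun x => ?_) R).symm
  simpa using kernelIntegrand_neg_ofReal hnodd x
end

section
/- Let n ≥ 2 be an integer, 𝔨 > 0 and c ∈ ℝ. Then lim_{R→∞} R ∫_0^{π/(2n)} exp( −𝔨 R^n sin(nφ) + c R sin(φ) ) dφ = 0. -/
open Real Filter

/-! On `[0, π/(2n)]`, Jordan's inequality `sin (nφ) ≥ 2nφ/π` together with `0 ≤ sin φ ≤ φ` bounds
the integrand by `exp (-a φ)` with `a = (2𝔨n/π) Rⁿ - |c| R`, whose integral is at most `1/a`.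
Hence `R ∫ … ≤ 1 / ((2𝔨n/π) Rⁿ⁻¹ - |c|)`, which tends to `0` because `n ≥ 2`. -/

theorem integral_exp_neg_mul_le_inv {a L : ℝ} (ha : 0 < a) :
    ∫ x in (0 : ℝ)..L, exp (-(a * x)) ≤ a⁻¹ := by
  have hcomp : ∫ x in (0 : ℝ)..L, exp (-a * x) = (-a)⁻¹ * (exp (-a * L) - 1) := by
    rw [intervalIntegral.integral_comp_mul_left (fun x => exp x) (neg_ne_zero.2 ha.ne'),
      integral_exp, mul_zero, exp_zero, smul_eq_mul]
  simp only [neg_mul] at hcomp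
  rw [hcomp, inv_neg, neg_mul, ← mul_neg, neg_sub]
  exact mul_le_of_le_one_right (inv_nonneg.2 ha.le) (by linarith [exp_pos (-(a * L))])

theorem exponent_le_neg_mul {n : ℕ} (hn : n ≠ 0) {𝔨 R φ : ℝ} (h𝔨 : 0 ≤ 𝔨) (hR : 0 ≤ R) (c : ℝ)
    (hφ : φ ∈ Set.Icc 0 (π / (2 * n))) :
    -(𝔨 * R ^ n * sin (n * φ)) + c * R * sin φ
      ≤ -((2 * 𝔨 * n / π * R ^ n - |c| * R) * φ) := by
  obtain ⟨hφ0, hφL⟩ := hφ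
  have hnpos : (0 : ℝ) < n := by positivity
  have hnφ : n * φ ≤ π / 2 := by
    calc n * φ ≤ n * (π / (2 * n)) := by gcongr
      _ = π / 2 := by field_simp
  have hφπ : φ ≤ π := by
    calc φ ≤ n * φ := le_mul_of_one_le_left hφ0 (by exact_mod_cast Nat.one_le_iff_ne_zero.2 hn)
      _ ≤ π := by linarith [pi_pos]
  have hjordan : 2 / π * (n * φ) ≤ sin (n * φ) := mul_le_sin (by positivity) hnφ
  have hsin : c * sin φ ≤ |c| * φ :=
    (mul_le_mul_of_nonneg_right (le_abs_self c) (sin_nonneg_of_nonneg_of_le_pi hφ0 hφπ)).trans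
      (mul_le_mul_of_nonneg_left (sin_le hφ0) (abs_nonneg c))
  have hdecay := mul_le_mul_of_nonneg_left hjordan (by positivity : 0 ≤ 𝔨 * R ^ n)
  have hgrowth := mul_le_mul_of_nonneg_left hsin hR
  calc -(𝔨 * R ^ n * sin (n * φ)) + c * R * sin φ
      ≤ -(𝔨 * R ^ n * (2 / π * (n * φ))) + R * (|c| * φ) := by
        linarith
    _ = -((2 * 𝔨 * n / π * R ^ n - |c| * R) * φ) := by ring

theorem integral_arch_le {n : ℕ} (hn : n ≠ 0) {𝔨 R : ℝ} (h𝔨 : 0 ≤ 𝔨) (hR : 0 ≤ R) (c : ℝ)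
    (ha : 0 < 2 * 𝔨 * n / π * R ^ n - |c| * R) :
    ∫ φ in (0 : ℝ)..(π / (2 * n)), exp (-(𝔨 * R ^ n * sin (n * φ)) + c * R * sin φ)
      ≤ (2 * 𝔨 * n / π * R ^ n - |c| * R)⁻¹ := by
  refine le_trans ?_ (integral_exp_neg_mul_le_inv (L := π / (2 * n)) ha)
  refine intervalIntegral.integral_mono_on (by positivity)
    (Continuous.intervalIntegrable (by fun_prop) _ _)
    (Continuous.intervalIntegrable (by fun_prop) _ _) ?_
  exact fun φ hφ => exp_le_exp.2 (exponent_le_neg_mul hn h𝔨 hR c hφ)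

/-- The arch estimate: for `n ≥ 2`, `𝔨 > 0` and `c ∈ ℝ`,
`R ∫_0^{π/(2n)} exp(-𝔨 Rⁿ sin(nφ) + c R sin φ) dφ → 0` as `R → ∞`. -/
theorem stmt9 (n : ℕ) (hn : 2 ≤ n) (𝔨 : ℝ) (h𝔨 : 0 < 𝔨) (c : ℝ) :
    Tendsto (fun R : ℝ =>
        R * ∫ φ in (0 : ℝ)..(π / (2 * n)),
          Real.exp (-(𝔨 * R ^ n * Real.sin (n * φ)) + c * R * Real.sin φ))
      atTop (nhds 0) := by
  have hn0 : n ≠ 0 := by omega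
  set g : ℝ → ℝ := fun R => 2 * 𝔨 * n / π * R ^ (n - 1) - |c|
  have hg : Tendsto g atTop atTop :=
    tendsto_atTop_add_const_right _ _ <|
      (tendsto_pow_atTop (by omega)).const_mul_atTop (by positivity)
  refine squeeze_zero' ?_ ?_ (tendsto_inv_atTop_zero.comp hg)
  · filter_upwards [eventually_ge_atTop 0] with R hR
    exact mul_nonneg hR <| intervalIntegral.integral_nonneg (by positivity) fun _ _ => (exp_pos _).le
  · filter_upwards [eventually_gt_atTop 0, hg.eventually_gt_atTop 0] with R hR hgR
    have ha : 2 * 𝔨 * n / π * R ^ n - |c| * R = R * g R := by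
      simp only [g]; rw [← mul_pow_sub_one hn0 R]; ring
    calc _ ≤ R * (R * g R)⁻¹ := by
          rw [← ha]
          exact mul_le_mul_of_nonneg_left
            (integral_arch_le hn0 h𝔨.le hR.le c (ha ▸ mul_pos hR hgR)) hR.le
      _ = (g R)⁻¹ := by field_simp
end

section
/- Let n ≥ 2 be an integer and a ∈ ℝ. Then ∫_0^∞ z^{1/n − 1} e^{-z} cos(a z^{1/n}) dz = Σ_{m=0}^∞ ((-1)^m a^{2m} / (2m)!) · Γ((2m+1)/n), where Γ is the Gamma function; the integral converges absolutely and the series converges absolutely. -/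
open MeasureTheory Real

/-- If `0 < w ≤ x ≤ y` then `Γ(x) ≤ Γ(w) + Γ(y)`. -/
lemma gamma_le_add_aux {w x y : ℝ} (hw : 0 < w) (hwx : w ≤ x) (hxy : x ≤ y) :
    Real.Gamma x ≤ Real.Gamma w + Real.Gamma y := by
  have hx : 0 < x := hw.trans_le hwx
  have hy : 0 < y := hx.trans_le hxy
  rw [Real.Gamma_eq_integral hw, Real.Gamma_eq_integral hx, Real.Gamma_eq_integral hy,
    ← MeasureTheory.integral_add (Real.GammaIntegral_convergent hw)
      (Real.GammaIntegral_convergent hy)]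
  apply setIntegral_mono_on (Real.GammaIntegral_convergent hx)
    ((Real.GammaIntegral_convergent hw).add (Real.GammaIntegral_convergent hy))
    measurableSet_Ioi
  intro t ht
  simp only [Set.mem_Ioi] at ht
  simp only [Pi.add_apply]
  rw [← mul_add]
  apply mul_le_mul_of_nonneg_left _ (Real.exp_pos _).le
  rcases le_total t 1 with h1 | h1
  · calc t ^ (x - 1) ≤ t ^ (w - 1) :=
          Real.rpow_le_rpow_of_exponent_ge ht h1 (by linarith)
      _ ≤ t ^ (w - 1) + t ^ (y - 1) :=
          le_add_of_nonneg_right (Real.rpow_nonneg ht.le _)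
  · calc t ^ (x - 1) ≤ t ^ (y - 1) :=
          Real.rpow_le_rpow_of_exponent_le h1 (by linarith)
      _ ≤ t ^ (w - 1) + t ^ (y - 1) :=
          le_add_of_nonneg_left (Real.rpow_nonneg ht.le _)

/-- For `n ≥ 2` and `a ∈ ℝ`,
`∫_0^∞ z^{1/n - 1} e^{-z} cos(a z^{1/n}) dz = Σ_m ((-1)^m a^{2m}/(2m)!) Γ((2m+1)/n)`,
the integral converging absolutely and the series converging absolutely. -/
theorem stmt10 (n : ℕ) (hn : 2 ≤ n) (a : ℝ) :
    IntegrableOn (fun z : ℝ =>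
      z ^ (1 / (n : ℝ) - 1) * Real.exp (-z) * Real.cos (a * z ^ (1 / (n : ℝ))))
      (Set.Ioi 0) ∧
    Summable (fun m : ℕ =>
      |((-1 : ℝ) ^ m * a ^ (2 * m) / (Nat.factorial (2 * m))) *
        Real.Gamma ((2 * m + 1) / n)|) ∧
    (∫ z in Set.Ioi (0 : ℝ),
        z ^ (1 / (n : ℝ) - 1) * Real.exp (-z) * Real.cos (a * z ^ (1 / (n : ℝ)))) =
      ∑' m : ℕ, ((-1 : ℝ) ^ m * a ^ (2 * m) / (Nat.factorial (2 * m))) *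
        Real.Gamma ((2 * m + 1) / n) := by
  have hn0 : (0 : ℝ) < n := by positivity
  have hn2 : (2 : ℝ) ≤ n := by exact_mod_cast hn
  set c : ℝ := 1 / n with hc_def
  have hc : 0 < c := by positivity
  -- exponents of each term
  have hp : ∀ m : ℕ, (0 : ℝ) < (2 * m + 1) / n := fun m => by positivity
  -- coefficients
  set C : ℕ → ℝ := fun m => (-1 : ℝ) ^ m * a ^ (2 * m) / (Nat.factorial (2 * m)) with hC_def
  -- per-term functions
  set g : ℕ → ℝ → ℝ :=
    fun m z => C m * (Real.exp (-z) * z ^ ((2 * (m : ℝ) + 1) / n - 1)) with hg_def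
  -- integrability of each term
  have hg_int : ∀ m : ℕ, IntegrableOn (g m) (Set.Ioi 0) :=
    fun m => (Real.GammaIntegral_convergent (hp m)).const_mul _
  -- value of each integral
  have hg_val : ∀ m : ℕ, (∫ z in Set.Ioi (0 : ℝ), g m z)
      = C m * Real.Gamma ((2 * m + 1) / n) := by
    intro m
    simp only [hg_def]
    rw [MeasureTheory.integral_const_mul, ← Real.Gamma_eq_integral (hp m)]
  -- absolute value of coefficients
  have hCabs : ∀ m : ℕ, |C m| = (a ^ 2) ^ m / (Nat.factorial (2 * m)) := by
    intro m
    simp only [hC_def]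
    rw [abs_div, abs_mul, abs_pow, abs_neg, abs_one, one_pow, one_mul, Nat.abs_cast,
      abs_of_nonneg ((even_two_mul m).pow_nonneg a), pow_mul]
  -- the summability claim
  have habs : Summable (fun m : ℕ => |C m * Real.Gamma ((2 * m + 1) / n)|) := by
    apply Summable.of_nonneg_of_le (fun m => abs_nonneg _)
      (f := fun m => (Real.Gamma (1 / n) + 1) * ((a ^ 2) ^ m / m.factorial))
    · intro m
      have hΓpos : 0 < Real.Gamma ((2 * m + 1) / n) := Real.Gamma_pos_of_pos (hp m)
      have hΓ : Real.Gamma ((2 * m + 1) / n)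
          ≤ Real.Gamma (1 / n) + (m.factorial : ℝ) := by
        have := gamma_le_add_aux (w := 1 / n) (x := (2 * m + 1) / n) (y := (m : ℝ) + 1)
          (by positivity)
          (by
            gcongr
            linarith [Nat.cast_nonneg (α := ℝ) m])
          (by
            rw [div_le_iff₀ hn0]
            nlinarith [Nat.cast_nonneg (α := ℝ) m])
        rwa [Real.Gamma_nat_eq_factorial m] at this
      have hq : (0 : ℝ) ≤ (a ^ 2) ^ m := by positivity
      have hF1 : (0 : ℝ) < m.factorial := by exact_mod_cast m.factorial_pos
      have hF2 : (0 : ℝ) < (2 * m).factorial := by exact_mod_cast (2 * m).factorial_pos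
      have hFF : (m.factorial : ℝ) * m.factorial ≤ (2 * m).factorial := by
        exact_mod_cast Nat.le_of_dvd (2 * m).factorial_pos
          (by simpa [two_mul] using Nat.factorial_mul_factorial_dvd_factorial_add m m)
      have hF12 : (m.factorial : ℝ) ≤ (2 * m).factorial := by
        exact_mod_cast Nat.factorial_le (by omega)
      have hG : (0 : ℝ) < Real.Gamma (1 / n) := Real.Gamma_pos_of_pos (by positivity)
      calc |C m * Real.Gamma ((2 * m + 1) / n)|
          = (a ^ 2) ^ m / (Nat.factorial (2 * m)) * Real.Gamma ((2 * m + 1) / n) := by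
            rw [abs_mul, hCabs m, abs_of_pos hΓpos]
        _ ≤ (a ^ 2) ^ m / (Nat.factorial (2 * m)) * (Real.Gamma (1 / n) + m.factorial) := by
            apply mul_le_mul_of_nonneg_left hΓ (by positivity)
        _ ≤ (Real.Gamma (1 / n) + 1) * ((a ^ 2) ^ m / m.factorial) := by
            rw [div_mul_eq_mul_div, ← mul_div_assoc, div_le_div_iff₀ hF2 hF1]
            nlinarith [mul_le_mul_of_nonneg_left hF12 (mul_nonneg hq hG.le),
              mul_le_mul_of_nonneg_left hFF hq]
    · exact (Real.summable_pow_div_factorial (a ^ 2)).mul_left _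
  -- pointwise series expansion
  have key : ∀ z ∈ Set.Ioi (0 : ℝ),
      z ^ (c - 1) * Real.exp (-z) * Real.cos (a * z ^ c) = ∑' m : ℕ, g m z := by
    intro z hz
    have hz0 : 0 < z := hz
    rw [Real.cos_eq_tsum, ← tsum_mul_left]
    refine tsum_congr fun m => ?_
    simp only [hg_def, hC_def]
    have h1 : (a * z ^ c) ^ (2 * m) = a ^ (2 * m) * z ^ (c * (2 * m : ℕ)) := by
      rw [mul_pow, ← Real.rpow_natCast (z ^ c) (2 * m), ← Real.rpow_mul hz0.le]
    have h2 : z ^ (c - 1) * z ^ (c * ((2 * m : ℕ) : ℝ)) = z ^ ((2 * (m : ℝ) + 1) / n - 1) := by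
      rw [← Real.rpow_add hz0]
      congr 1
      rw [hc_def]
      push_cast
      field_simp
      ring
    rw [h1, ← h2]
    ring
  -- integrability of the full integrand
  have hcont : ContinuousOn (fun z : ℝ =>
      z ^ (c - 1) * Real.exp (-z) * Real.cos (a * z ^ c)) (Set.Ioi 0) := by
    apply ContinuousOn.mul
    · exact (continuousOn_id.rpow_const fun z hz => Or.inl (ne_of_gt hz)).mul
        (Real.continuous_exp.comp continuous_neg).continuousOn
    · exact Real.continuous_cos.comp_continuousOn
        (continuousOn_const.mul (continuousOn_id.rpow_const fun z hz => Or.inl (ne_of_gt hz)))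
  have hint : IntegrableOn (fun z : ℝ =>
      z ^ (c - 1) * Real.exp (-z) * Real.cos (a * z ^ c)) (Set.Ioi 0) := by
    apply Integrable.mono (Real.GammaIntegral_convergent hc)
      (hcont.aestronglyMeasurable measurableSet_Ioi)
    refine (ae_restrict_iff' measurableSet_Ioi).mpr (Filter.Eventually.of_forall fun z hz => ?_)
    have hz0 : (0 : ℝ) < z := hz
    simp only [Real.norm_eq_abs, abs_mul]
    rw [abs_of_pos (Real.exp_pos _), abs_of_pos (Real.rpow_pos_of_pos hz0 _)]
    calc z ^ (c - 1) * Real.exp (-z) * |Real.cos (a * z ^ c)|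
        ≤ z ^ (c - 1) * Real.exp (-z) * 1 :=
          mul_le_mul_of_nonneg_left (Real.abs_cos_le_one _) (by positivity)
      _ = Real.exp (-z) * z ^ (c - 1) := by ring
  refine ⟨hint, habs, ?_⟩
  -- norm integrals of terms
  have hnorm : ∀ m : ℕ, (∫ z in Set.Ioi (0 : ℝ), ‖g m z‖)
      = |C m * Real.Gamma ((2 * m + 1) / n)| := by
    intro m
    have h1 : ∀ z ∈ Set.Ioi (0 : ℝ), ‖g m z‖
        = |C m| * (Real.exp (-z) * z ^ ((2 * (m : ℝ) + 1) / n - 1)) := by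
      intro z hz
      have hz0 : (0 : ℝ) < z := hz
      simp only [hg_def, Real.norm_eq_abs, abs_mul]
      rw [abs_of_pos (Real.exp_pos _), abs_of_pos (Real.rpow_pos_of_pos hz0 _)]
    rw [setIntegral_congr_fun measurableSet_Ioi h1, MeasureTheory.integral_const_mul,
      ← Real.Gamma_eq_integral (hp m), abs_mul,
      abs_of_pos (Real.Gamma_pos_of_pos (hp m))]
  -- swap integral and sum
  have hswap := MeasureTheory.integral_tsum_of_summable_integral_norm
    (μ := volume.restrict (Set.Ioi 0)) hg_int
    (by
      apply Summable.congr habs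
      intro m
      exact (hnorm m).symm)
  rw [setIntegral_congr_fun measurableSet_Ioi key, ← hswap]
  exact tsum_congr fun m => hg_val m
end
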